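/- arXiv:1107.4794 — 3 statements merged into one kernel-verified Lean document; each statement's English description precedes it below -/
import Mathlib

section
/- Any two homogeneous, separable and complete metric spaces M and N with the same age are isometric, i.e., there exists a bijective isometry from M onto N. -/
/-- The set of distances realized in a metric space. -/
def distSet (X : Type*) [MetricSpace X] : Set ℝ :=
  {r : ℝ | ∃ x y : X, dist x y = r}

/-- A metric space is homogeneous if every isometry from a finite subset into the
space extends to a bijective self-isometry. -/
def IsHomogeneous (X : Type*) [MetricSpace X] : Prop :=
  ∀ F : Set X, F.Finite →
    ∀ f : F → X, (∀ x y : F, dist (f x) (f y) = dist (x : X) (y : X)) →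
      ∃ g : X ≃ᵢ X, ∀ x : F, g (x : X) = f x

/-- A metric space is universal if it is homogeneous and embeds isometrically every
finite metric space whose distances lie in its distance set. -/
def IsUniversal (X : Type*) [MetricSpace X] : Prop :=
  IsHomogeneous X ∧
    ∀ (F : Type) [MetricSpace F] [Finite F], distSet F ⊆ distSet X →
      ∃ f : F → X, ∀ a b : F, dist (f a) (f b) = dist a b

/-- An Urysohn metric space: homogeneous, separable, complete, and embedding every
separable metric space whose distances lie in its distance set. -/
def IsUrysohn (X : Type*) [MetricSpace X] : Prop :=
  IsHomogeneous X ∧ TopologicalSpace.SeparableSpace X ∧ CompleteSpace X ∧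
    ∀ (N : Type) [MetricSpace N] [TopologicalSpace.SeparableSpace N],
      distSet N ⊆ distSet X →
        ∃ f : N → X, ∀ a b : N, dist (f a) (f b) = dist a b

/-- The triple `(a, b, c)` of nonnegative reals is metric: `|a - b| ≤ c ≤ a + b`. -/
def MetricTriple (a b c : ℝ) : Prop := |a - b| ≤ c ∧ c ≤ a + b

/-- `x ⤳ (a, b, c, d)`: the triples `(x,a,b)` and `(x,c,d)` are metric and
`a ≥ max {b, c, d}`. -/
def Leads (x a b c d : ℝ) : Prop :=
  MetricTriple x a b ∧ MetricTriple x c d ∧ b ≤ a ∧ c ≤ a ∧ d ≤ a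

/-- The 4-values condition. -/
def FourValues (R : Set ℝ) : Prop :=
  ∀ a b c d, a ∈ R → b ∈ R → c ∈ R → d ∈ R →
    (∃ x ∈ R, Leads x a b c d) → ∃ y ∈ R, Leads y a d c b

/-- `0` is a limit point of `R ⊆ [0, ∞)`. -/
def ZeroLimit (R : Set ℝ) : Prop := ∀ ε > 0, ∃ r ∈ R, 0 < r ∧ r < ε

/-- `d` is a metric on the type `α`. -/
def IsMetricOn {α : Type*} (d : α → α → ℝ) : Prop :=
  (∀ x, d x x = 0) ∧ (∀ x y, d x y = d y x) ∧
    (∀ x y z, d x z ≤ d x y + d y z) ∧ ∀ x y, d x y = 0 → x = y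

/-- A restricted type function of the metric space `X`: a positive real valued function on a
finite subset of `X`, compatible with the metric, with values in the distance set of `X`. -/
def IsRestrictedType (X : Type*) [MetricSpace X] (F : Set X) (t : F → ℝ) : Prop :=
  F.Finite ∧ (∀ x, 0 < t x) ∧
    (∀ x y : F, |t x - t y| ≤ dist (x : X) (y : X) ∧ dist (x : X) (y : X) ≤ t x + t y) ∧
    ∀ x, t x ∈ distSet X

/-- A Katětov function of the metric space `X`: a positive real valued function on a finite
subset of `X` whose one-point extension `Sp(k)` is isometric to a subspace of `X`. -/
def IsKatetov (X : Type*) [MetricSpace X] (F : Set X) (k : F → ℝ) : Prop :=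
  F.Finite ∧ (∀ x, 0 < k x) ∧
    ∃ (g : F → X) (p : X),
      (∀ x y : F, dist (g x) (g y) = dist (x : X) (y : X)) ∧ ∀ x : F, dist p (g x) = k x

/-- `p` realizes the type function `t` in `X`. -/
def Realizes {X : Type*} [MetricSpace X] (F : Set X) (t : F → ℝ) (p : X) : Prop :=
  ∀ x : F, dist p (x : X) = t x

/-!
If the age of `M` is contained in that of `N` and `N` is homogeneous, every finite partial
isometry from `M` to `N` extends to any further point `x` of `M`: embed its domain together with
`x` into `N`, then move the embedded domain onto the given range by a self-isometry of `N`.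
Symmetrically it extends to any further point of `N`. A back-and-forth over countable dense
subsets of `M` and `N` yields a distance-preserving relation between dense subsets, and two
complete spaces with such a relation are isometric, being completions of the same space.
-/

open Set Order TopologicalSpace UniformSpace

def AgeLE (M N : Type*) [MetricSpace M] [MetricSpace N] : Prop :=
  ∀ F : Set M, F.Finite → ∃ f : F → N, ∀ x y : F, dist (f x) (f y) = dist (x : M) (y : M)

section Completion

variable {α M N : Type*} [MetricSpace M] [MetricSpace N]

theorem Isometry.surjective_of_denseRange [MetricSpace α] [CompleteSpace α] {f : α → M}
    (hf : Isometry f) (hd : DenseRange f) : Function.Surjective f := by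
  rw [← range_eq_univ, ← hd.closure_range, hf.isClosedEmbedding.isClosed_range.closure_eq]

theorem Isometry.nonempty_completion_isometryEquiv [PseudoMetricSpace α] [CompleteSpace M]
    {f : α → M} (hf : Isometry f) (hd : DenseRange f) : Nonempty (Completion α ≃ᵢ M) := by
  have hF := hf.completion_extension
  have hFd : DenseRange (Completion.extension f) :=
    hd.mono <| range_subset_iff.2 fun (a : α) ↦
      ⟨(a : Completion α), Completion.extension_coe hf.uniformContinuous a⟩
  exact ⟨{ Equiv.ofBijective _ ⟨hF.injective, hF.surjective_of_denseRange hFd⟩ with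
    isometry_toFun := hF }⟩

theorem nonempty_isometryEquiv_of_denseRange [CompleteSpace M] [CompleteSpace N]
    {f : α → M} {g : α → N} (hfg : ∀ a b, dist (g a) (g b) = dist (f a) (f b))
    (hf : DenseRange f) (hg : DenseRange g) : Nonempty (M ≃ᵢ N) := by
  let _ : PseudoMetricSpace α := PseudoMetricSpace.induced f inferInstance
  obtain ⟨eM⟩ := (Isometry.of_dist_eq (f := f) fun _ _ ↦ rfl).nonempty_completion_isometryEquiv hf
  obtain ⟨eN⟩ := (Isometry.of_dist_eq hfg).nonempty_completion_isometryEquiv hg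
  exact ⟨eM.symm.trans eN⟩

end Completion

section Homogeneous

variable {ι M N : Type*} [MetricSpace M] [MetricSpace N] [Finite ι]

theorem IsHomogeneous.exists_isometryEquiv_comp_eq (hN : IsHomogeneous N) {x y : ι → N}
    (hxy : ∀ i j, dist (y i) (y j) = dist (x i) (x j)) : ∃ g : N ≃ᵢ N, ∀ i, g (x i) = y i := by
  have hy : ∀ i j, x i = x j → y i = y j := fun i j h ↦
    dist_eq_zero.1 <| by rw [hxy, h, dist_self]
  obtain ⟨g, hg⟩ := hN (range x) (finite_range x) (y ∘ rangeSplitting x) fun a b ↦ by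
    simp only [Function.comp_apply, hxy, apply_rangeSplitting]
  refine ⟨g, fun i ↦ (hg ⟨x i, mem_range_self i⟩).trans (hy _ _ ?_)⟩
  exact apply_rangeSplitting x _

theorem IsHomogeneous.exists_dist_eq (hN : IsHomogeneous N) (hMN : AgeLE M N) {x : ι → M}
    {y : ι → N} (hxy : ∀ i j, dist (y i) (y j) = dist (x i) (x j)) (m : M) :
    ∃ n : N, ∀ i, dist (y i) n = dist (x i) m := by
  obtain ⟨e, he⟩ := hMN (insert m (range x)) ((finite_range x).insert m)
  let e' : ι → N := fun i ↦ e ⟨x i, mem_insert_of_mem m (mem_range_self i)⟩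
  obtain ⟨g, hg⟩ := hN.exists_isometryEquiv_comp_eq (x := e') (y := y) fun i j ↦ by
    rw [hxy, he]
  refine ⟨g (e ⟨m, mem_insert m _⟩), fun i ↦ ?_⟩
  rw [← hg, g.dist_eq, he]

end Homogeneous

section PartialIsometry

variable {M N : Type*} [MetricSpace M] [MetricSpace N]

def IsPartialIsometry (s : Set (M × N)) : Prop :=
  ∀ p ∈ s, ∀ q ∈ s, dist p.2 q.2 = dist p.1 q.1

theorem IsPartialIsometry.insert {s : Set (M × N)} (hs : IsPartialIsometry s) {m : M} {n : N}
    (h : ∀ q ∈ s, dist q.2 n = dist q.1 m) : IsPartialIsometry (insert (m, n) s) := by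
  rintro p (rfl | hp) q (rfl | hq)
  · simp
  · rw [dist_comm, h q hq, dist_comm]
  · exact h p hp
  · exact hs p hp q hq

end PartialIsometry

def FinPartialIsometry (M N : Type*) [MetricSpace M] [MetricSpace N] : Type _ :=
  {s : Finset (M × N) // IsPartialIsometry (s : Set (M × N))}

namespace FinPartialIsometry

variable {M N : Type*} [MetricSpace M] [MetricSpace N]

instance : Preorder (FinPartialIsometry M N) := Subtype.preorder _

instance : Inhabited (FinPartialIsometry M N) := ⟨⟨∅, by simp [IsPartialIsometry]⟩⟩

def definedAtLeft (hN : IsHomogeneous N) (hMN : AgeLE M N) (m : M) :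
    Cofinal (FinPartialIsometry M N) where
  carrier := {f | ∃ n, (m, n) ∈ f.1}
  isCofinal f := by
    classical
    obtain ⟨n, hn⟩ := hN.exists_dist_eq hMN (x := fun q : f.1 ↦ q.1.1) (y := fun q ↦ q.1.2)
      (fun p q ↦ f.2 p p.2 q q.2) m
    refine ⟨⟨insert (m, n) f.1, ?_⟩, ⟨n, Finset.mem_insert_self _ _⟩, Finset.subset_insert _ _⟩
    rw [Finset.coe_insert]
    exact f.2.insert fun q hq ↦ hn ⟨q, hq⟩

def definedAtRight (hM : IsHomogeneous M) (hNM : AgeLE N M) (n : N) :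
    Cofinal (FinPartialIsometry M N) where
  carrier := {f | ∃ m, (m, n) ∈ f.1}
  isCofinal f := by
    classical
    obtain ⟨m, hm⟩ := hM.exists_dist_eq hNM (x := fun q : f.1 ↦ q.1.2) (y := fun q ↦ q.1.1)
      (fun p q ↦ (f.2 p p.2 q q.2).symm) n
    refine ⟨⟨insert (m, n) f.1, ?_⟩, ⟨m, Finset.mem_insert_self _ _⟩, Finset.subset_insert _ _⟩
    rw [Finset.coe_insert]
    exact f.2.insert fun q hq ↦ (hm ⟨q, hq⟩).symm

def graph (I : Ideal (FinPartialIsometry M N)) : Set (M × N) := {q | ∃ f ∈ I, q ∈ f.1}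

theorem isPartialIsometry_graph (I : Ideal (FinPartialIsometry M N)) :
    IsPartialIsometry (graph I) := by
  rintro p hp q hq
  obtain ⟨f, hfI, hpf⟩ := hp
  obtain ⟨g, hgI, hqg⟩ := hq
  obtain ⟨h, -, hfh, hgh⟩ := I.directed f hfI g hgI
  exact h.2 p (hfh hpf) q (hgh hqg)

end FinPartialIsometry

open FinPartialIsometry in
/-- Any two homogeneous, separable, complete metric spaces with the same age
are isometric. -/
theorem statement3 (M N : Type) [MetricSpace M] [MetricSpace N]
    [TopologicalSpace.SeparableSpace M] [CompleteSpace M]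
    [TopologicalSpace.SeparableSpace N] [CompleteSpace N]
    (hM : IsHomogeneous M) (hN : IsHomogeneous N)
    (hMN : ∀ F : Set M, F.Finite →
      ∃ f : F → N, ∀ x y : F, dist (f x) (f y) = dist (x : M) (y : M))
    (hNM : ∀ F : Set N, F.Finite →
      ∃ f : F → M, ∀ x y : F, dist (f x) (f y) = dist (x : N) (y : N)) :
    Nonempty (M ≃ᵢ N) := by
  obtain ⟨s, hs, hsd⟩ := exists_countable_dense M
  obtain ⟨t, ht, htd⟩ := exists_countable_dense N
  have := hs.to_subtype
  have := ht.to_subtype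
  let _ := Encodable.ofCountable (s ⊕ t)
  let D : s ⊕ t → Cofinal (FinPartialIsometry M N) :=
    Sum.elim (fun m ↦ definedAtLeft hN hMN m) (fun n ↦ definedAtRight hM hNM n)
  let I := idealOfCofinals default D
  have hfst : s ⊆ range fun q : graph I ↦ q.1.1 := fun m hm ↦ by
    obtain ⟨f, ⟨n, hn⟩, hfI⟩ := cofinal_meets_idealOfCofinals default D (.inl ⟨m, hm⟩)
    exact ⟨⟨(m, n), f, hfI, hn⟩, rfl⟩
  have hsnd : t ⊆ range fun q : graph I ↦ q.1.2 := fun n hn ↦ by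
    obtain ⟨f, ⟨m, hm⟩, hfI⟩ := cofinal_meets_idealOfCofinals default D (.inr ⟨n, hn⟩)
    exact ⟨⟨(m, n), f, hfI, hm⟩, rfl⟩
  exact nonempty_isometryEquiv_of_denseRange (f := fun q : graph I ↦ q.1.1) (g := fun q ↦ q.1.2)
    (fun p q ↦ isPartialIsometry_graph I p.1 p.2 q.1 q.2) (hsd.mono hfst) (htd.mono hsnd)
end

section
/- The set of distances of a universal metric space satisfies the 4-values condition: if M is a universal metric space, then dist(M) satisfies the 4-values condition. -/
/-! To find `y`, realize `x` as `dist u v`. Universality embeds a triangle with sides `x, a, b`,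
and homogeneity moves its base onto `(u, v)`; this gives `w₁` with `dist w₁ u = a`,
`dist w₁ v = b`, and likewise `w₂` with `dist w₂ u = d`, `dist w₂ v = c`. The triangle
inequalities in `{u, v, w₁, w₂}` show that `y = dist w₁ w₂` satisfies `y ⤳ (a, d, c, b)`. -/

inductive Triangle
  | A | B | C
  deriving DecidableEq

instance : Fintype Triangle := ⟨{.A, .B, .C}, fun i => by cases i <;> simp⟩

def triangleDist (x a b : ℝ) : Triangle → Triangle → ℝ
  | .A, .B | .B, .A => x
  | .A, .C | .C, .A => a
  | .B, .C | .C, .B => b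
  | _, _ => 0

/-- Only a pseudometric: some of the sides `x`, `a`, `b` may vanish. -/
abbrev Triangle.pseudoMetricSpace {x a b : ℝ} (h : MetricTriple x a b) :
    PseudoMetricSpace Triangle where
  dist := triangleDist x a b
  dist_self i := by cases i <;> rfl
  dist_comm i j := by cases i <;> cases j <;> rfl
  dist_triangle i j k := by
    obtain ⟨h₁, h₂⟩ := h
    rw [abs_sub_le_iff] at h₁
    cases i <;> cases j <;> cases k <;> simp only [triangleDist] <;> linarith

theorem metricTriple_dist {X : Type*} [PseudoMetricSpace X] (x y z : X) :
    MetricTriple (dist x y) (dist x z) (dist y z) :=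
  ⟨abs_sub_le_iff.mpr
    ⟨by linarith [dist_triangle x z y, dist_comm z y], by linarith [dist_triangle x y z]⟩,
    dist_triangle_left y z x⟩

section

variable {X : Type*} [MetricSpace X]

theorem IsHomogeneous.exists_isometryEquiv_pair (hX : IsHomogeneous X) {p q u v : X}
    (h : dist p q = dist u v) : ∃ g : X ≃ᵢ X, g p = u ∧ g q = v := by
  classical
  have huv : q = p → u = v := fun hqp => by rw [← dist_eq_zero, ← h, hqp, dist_self]
  let f : ({p, q} : Set X) → X := fun z => if (z : X) = p then u else v
  have hf : ∀ z w, dist (f z) (f w) = dist (z : X) (w : X) := by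
    rintro ⟨z, hz⟩ ⟨w, hw⟩
    simp only [Set.mem_insert_iff, Set.mem_singleton_iff] at hz hw
    obtain rfl | hqp := eq_or_ne q p
    · obtain rfl := huv rfl
      simp_all [f]
    · have h' : dist q p = dist v u := by rw [dist_comm, h, dist_comm]
      rcases hz with rfl | rfl <;> rcases hw with rfl | rfl <;> simp [f, hqp, h, h']
  obtain ⟨g, hg⟩ := hX _ (Set.toFinite _) f hf
  refine ⟨g, by simpa [f] using hg ⟨p, by simp⟩, (hg ⟨q, by simp⟩).trans ?_⟩
  show (if q = p then u else v) = v
  split_ifs with hqp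
  exacts [huv hqp, rfl]

theorem IsUniversal.exists_dist_preserving (hX : IsUniversal X) {F : Type}
    [PseudoMetricSpace F] [Finite F] (hF : ∀ i j : F, dist i j ∈ distSet X) :
    ∃ f : F → X, ∀ i j, dist (f i) (f j) = dist i j := by
  have : Finite (SeparationQuotient F) := Finite.of_surjective _ SeparationQuotient.surjective_mk
  obtain ⟨f, hf⟩ := hX.2 (SeparationQuotient F) <| by
    rintro _ ⟨p, q, rfl⟩
    obtain ⟨i, rfl⟩ := SeparationQuotient.surjective_mk p
    obtain ⟨j, rfl⟩ := SeparationQuotient.surjective_mk q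
    simpa only [SeparationQuotient.dist_mk] using hF i j
  exact ⟨f ∘ SeparationQuotient.mk, fun i j => (hf _ _).trans (SeparationQuotient.dist_mk i j)⟩

theorem IsUniversal.exists_triangle (hX : IsUniversal X) {x a b : ℝ} (hx : x ∈ distSet X)
    (ha : a ∈ distSet X) (hb : b ∈ distSet X) (h : MetricTriple x a b) :
    ∃ p q w : X, dist p q = x ∧ dist w p = a ∧ dist w q = b := by
  let := Triangle.pseudoMetricSpace h
  have h₀ : (0 : ℝ) ∈ distSet X := by
    obtain ⟨u, -, -⟩ := hx
    exact ⟨u, u, dist_self u⟩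
  obtain ⟨f, hf⟩ := hX.exists_dist_preserving (F := Triangle) fun i j => by
    cases i <;> cases j <;> assumption
  exact ⟨f .A, f .B, f .C, hf _ _, hf _ _, hf _ _⟩

theorem IsUniversal.exists_dist_eq_dist_eq (hX : IsUniversal X) {u v : X} {a b : ℝ}
    (ha : a ∈ distSet X) (hb : b ∈ distSet X) (h : MetricTriple (dist u v) a b) :
    ∃ w, dist w u = a ∧ dist w v = b := by
  obtain ⟨p, q, w, hpq, hwp, hwq⟩ := hX.exists_triangle ⟨u, v, rfl⟩ ha hb h
  obtain ⟨g, rfl, rfl⟩ := hX.1.exists_isometryEquiv_pair hpq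
  exact ⟨g w, by rw [g.dist_eq, hwp], by rw [g.dist_eq, hwq]⟩

end

/-- The distance set of a universal metric space satisfies the
4-values condition. -/
theorem statement4 (M : Type) [MetricSpace M] (hM : IsUniversal M) :
    FourValues (distSet M) := by
  rintro a b c d ha hb hc hd ⟨_, ⟨u, v, rfl⟩, hab, hcd, hba, hca, hda⟩
  obtain ⟨w₁, hu₁, hv₁⟩ := hM.exists_dist_eq_dist_eq ha hb hab
  obtain ⟨w₂, hv₂, hu₂⟩ := hM.exists_dist_eq_dist_eq hc hd (dist_comm u v ▸ hcd)
  refine ⟨dist w₁ w₂, ⟨w₁, w₂, rfl⟩, ?_, ?_, hda, hca, hba⟩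
  · simpa only [hu₁, hu₂] using metricTriple_dist w₁ w₂ u
  · simpa only [dist_comm w₂ w₁, hv₁, hv₂] using metricTriple_dist w₂ w₁ v
end

section
/- Let R ⊆ [0,∞) with 0 ∈ R be countable, satisfy the 4-values condition, and have 0 as a limit point. Let U be a countable universal metric space with dist(U) = R and let M be the metric completion of U. Then a finite metric space A = {a_0, …, a_{m−1}} admits an isometric embedding into M if and only if for every ε > 0 there exists a metric space B = {b_0, …, b_{m−1}} with dist(B) ⊆ R such that |d_A(a_i,a_j) − d_B(b_i,b_j)| < ε for all i, j < m. -/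
open Function Filter Topology

theorem metricTriple_iff {a b c : ℝ} :
    MetricTriple a b c ↔ a ≤ b + c ∧ b ≤ a + c ∧ c ≤ a + b := by
  rw [MetricTriple, abs_sub_le_iff]
  constructor
  · rintro ⟨⟨h₁, h₂⟩, h₃⟩
    exact ⟨by linarith, by linarith, h₃⟩
  · rintro ⟨h₁, h₂, h₃⟩
    exact ⟨⟨by linarith, by linarith⟩, h₃⟩

theorem MetricTriple.swap {a b c : ℝ} (h : MetricTriple a b c) : MetricTriple a c b := by
  rw [metricTriple_iff] at *
  exact ⟨by linarith, by linarith, by linarith⟩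

theorem nonneg_of_mem_distSet {X : Type*} [MetricSpace X] {r : ℝ} (hr : r ∈ distSet X) :
    0 ≤ r := by
  obtain ⟨x, y, rfl⟩ := hr
  exact dist_nonneg

namespace IsMetricOn

variable {α : Type*} {d : α → α → ℝ}

theorem abs_sub_le (hd : IsMetricOn d) (i j k : α) : |d i k - d j k| ≤ d i j := by
  obtain ⟨-, hsymm, htri, -⟩ := hd
  rw [abs_sub_le_iff]
  constructor <;> linarith [htri i j k, htri j i k, hsymm i j]

theorem metricTriple (hd : IsMetricOn d) (i j k : α) : MetricTriple (d i j) (d k i) (d k j) := by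
  obtain ⟨-, hsymm, htri, -⟩ := hd
  rw [metricTriple_iff]
  exact ⟨by linarith [htri i k j, hsymm i k], by linarith [htri k j i, hsymm j i],
    by linarith [htri k i j]⟩

theorem comp (hd : IsMetricOn d) {β : Type*} {f : β → α} (hf : Injective f) :
    IsMetricOn fun i j => d (f i) (f j) :=
  ⟨fun _ => hd.1 _, fun _ _ => hd.2.1 _ _, fun _ _ _ => hd.2.2.1 _ _ _,
    fun _ _ h => hf (hd.2.2.2 _ _ h)⟩

end IsMetricOn

section KatetovEmbedding

variable {ι : Type*} [Fintype ι]

theorem dist_pi_eq_of_abs_sub_le {f g : ι → ℝ} {r : ℝ} (i : ι) (hi : |f i - g i| = r)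
    (h : ∀ k, |f k - g k| ≤ r) : dist f g = r := by
  refine le_antisymm ((dist_pi_le_iff (hi ▸ abs_nonneg _)).2 fun k => ?_) ?_
  · rw [Real.dist_eq]
    exact h k
  · rw [← hi, ← Real.dist_eq]
    exact dist_le_pi_dist f g i

theorem dist_rows_eq {d : ι → ι → ℝ} (hd : ∀ i j k, |d i k - d j k| ≤ d i j)
    (hd₀ : ∀ j, d j j = 0) (i j : ι) : dist (d i) (d j) = d i j := by
  refine dist_pi_eq_of_abs_sub_le j ?_ (hd i j)
  have := hd i j j
  rw [hd₀, sub_zero] at this ⊢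
  exact abs_of_nonneg ((abs_nonneg _).trans this)

theorem dist_katetov_row {X : Type*} [MetricSpace X] (z : ι → X) {t : ι → ℝ}
    (ht : ∀ i j, MetricTriple (dist (z i) (z j)) (t i) (t j)) (i : ι) :
    dist t (fun k => dist (z i) (z k)) = t i := by
  refine dist_pi_eq_of_abs_sub_le i ?_ fun k => ?_
  · have := (metricTriple_iff.1 (ht i i)).1
    rw [dist_self] at this ⊢
    rw [sub_zero, abs_of_nonneg (by linarith)]
  · have := metricTriple_iff.1 (ht i k)
    rw [abs_sub_le_iff]
    constructor <;> linarith

end KatetovEmbedding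

theorem IsHomogeneous.exists_isometryEquiv_apply_eq {X : Type*} [MetricSpace X]
    (hX : IsHomogeneous X) {ι : Type*} [Finite ι] (u v : ι → X)
    (huv : ∀ i j, dist (v i) (v j) = dist (u i) (u j)) :
    ∃ g : X ≃ᵢ X, ∀ i, g (u i) = v i := by
  choose idx hidx using fun x : Set.range u => x.2
  obtain ⟨g, hg⟩ := hX (Set.range u) (Set.finite_range u) (fun x => v (idx x)) fun x y => by
    rw [huv, hidx, hidx]
  refine ⟨g, fun i => ?_⟩
  have hi : u (idx ⟨u i, i, rfl⟩) = u i := hidx _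
  rw [hg ⟨u i, i, rfl⟩, ← dist_eq_zero, huv, hi, dist_self]

theorem ZeroLimit.exists_chain {R : Set ℝ} (hR : ZeroLimit R) :
    ∀ (N : ℕ) {ε : ℝ}, 0 < ε → ∃ (s : Fin N → ℝ) (δ : ℝ), 0 < δ ∧ δ < ε ∧
      (∀ i, s i ∈ R ∧ s i < ε) ∧ ∀ i j, i < j → s i + δ ≤ s j
  | 0, ε, hε => ⟨Fin.elim0, ε / 2, by linarith, by linarith, fun i => i.elim0, fun i => i.elim0⟩
  | N + 1, ε, hε => by
    obtain ⟨r, hrR, hr₀, hrε⟩ := hR ε hε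
    obtain ⟨s, δ, hδ, hδr, hs, hgap⟩ := exists_chain hR N (half_pos hr₀)
    refine ⟨Fin.snoc s r, δ, hδ, by linarith, fun i => ?_, fun i j hij => ?_⟩
    · induction i using Fin.lastCases with
      | last => simpa using ⟨hrR, hrε⟩
      | cast i =>
        simp only [Fin.snoc_castSucc]
        exact ⟨(hs _).1, by linarith [(hs i).2]⟩
    · induction i using Fin.lastCases with
      | last => exact absurd hij (Fin.le_last j).not_gt
      | cast i =>
        induction j using Fin.lastCases with
        | last =>
          simp only [Fin.snoc_castSucc, Fin.snoc_last]
          linarith [(hs i).2]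
        | cast j =>
          simp only [Fin.snoc_castSucc]
          exact hgap i j (Fin.castSucc_lt_castSucc_iff.1 hij)

theorem exists_pos_le_dist {ι A : Type*} [Finite ι] [MetricSpace A] {b : ι → A}
    (hb : Injective b) : ∃ μ > 0, ∀ i j, i ≠ j → μ ≤ dist (b i) (b j) := by
  have : ∀ᶠ μ in 𝓝[>] (0 : ℝ), ∀ i j, i ≠ j → μ ≤ dist (b i) (b j) :=
    eventually_all.2 fun i => eventually_all.2 fun j => by
      by_cases hij : i = j
      · exact .of_forall fun _ h => absurd hij h
      · filter_upwards [nhdsWithin_le_nhds (eventually_le_nhds (dist_pos.2 (hb.ne hij)))]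
          with μ hμ _ using hμ
  obtain ⟨μ, hμ, hμ₀⟩ := (this.and self_mem_nhdsWithin).exists
  exact ⟨μ, hμ₀, hμ⟩

theorem exists_seq_of_forall_exists_succ {α : Type*} {P : ℕ → α → Prop}
    {Q : ℕ → α → α → Prop} (h₀ : ∃ x, P 0 x) (h : ∀ n x, P n x → ∃ y, P (n + 1) y ∧ Q n x y) :
    ∃ f : ℕ → α, ∀ n, P n (f n) ∧ Q n (f n) (f (n + 1)) := by
  obtain ⟨x₀, hx₀⟩ := h₀
  choose next hnext using h
  let g : ∀ n, {x // P n x} := fun n =>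
    Nat.rec ⟨x₀, hx₀⟩ (fun n x => ⟨next n x x.2, (hnext n x x.2).1⟩) n
  exact ⟨fun n => (g n).1, fun n => ⟨(g n).2, (hnext n _ (g n).2).2⟩⟩

theorem exists_dist_eq_of_tendsto_dist {ι Y : Type*} [MetricSpace Y] [CompleteSpace Y]
    {u : ℕ → ι → Y} (hu : ∀ i, CauchySeq fun n => u n i) {d : ι → ι → ℝ}
    (hd : ∀ i j, Tendsto (fun n => dist (u n i) (u n j)) atTop (𝓝 (d i j))) :
    ∃ L : ι → Y, ∀ i j, dist (L i) (L j) = d i j := by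
  choose L hL using fun i => cauchySeq_tendsto_of_complete (hu i)
  exact ⟨L, fun i j => tendsto_nhds_unique ((hL i).dist (hL j)) (hd i j)⟩

theorem exists_isMetricOn_approx_of_denseRange {U Y : Type*} [MetricSpace U] [MetricSpace Y]
    {φ : U → Y} (hφ : Isometry φ) (hdense : DenseRange φ) {ι : Type*} [Finite ι] {b : ι → Y}
    (hb : Injective b) {ε : ℝ} (hε : 0 < ε) :
    ∃ d : ι → ι → ℝ, IsMetricOn d ∧ (∀ i j, d i j ∈ distSet U) ∧
      ∀ i j, |dist (b i) (b j) - d i j| < ε := by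
  obtain ⟨μ, hμ, hbμ⟩ := exists_pos_le_dist hb
  have hη : 0 < min ε μ / 4 := by positivity
  choose u hu using fun i => Metric.denseRange_iff.1 hdense (b i) _ hη
  have hclose : ∀ i j, |dist (b i) (b j) - dist (u i) (u j)| < min ε μ / 2 := by
    intro i j
    have := dist_dist_dist_le (b i) (b j) (φ (u i)) (φ (u j))
    rw [hφ.dist_eq, Real.dist_eq] at this
    linarith [hu i, hu j]
  refine ⟨fun i j => dist (u i) (u j), ⟨fun _ => dist_self _, fun _ _ => dist_comm _ _,
    fun _ _ _ => dist_triangle _ _ _, fun i j h => ?_⟩, fun i j => ⟨_, _, rfl⟩,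
    fun i j => (hclose i j).trans_le (by linarith [min_le_left ε μ])⟩
  by_contra hij
  have := hclose i j
  rw [show dist (u i) (u j) = 0 from h, sub_zero, abs_of_nonneg dist_nonneg] at this
  linarith [hbμ i j hij, min_le_right ε μ]

namespace IsUniversal

variable {X : Type} [MetricSpace X] (hX : IsUniversal X)
include hX

theorem exists_dist_eq_dist {ι Y : Type} [Finite ι] [MetricSpace Y] (w : ι → Y)
    (hw : ∀ i j, dist (w i) (w j) ∈ distSet X) :
    ∃ z : ι → X, ∀ i j, dist (z i) (z j) = dist (w i) (w j) := by
  have : Finite (Set.range w) := Set.finite_range w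
  obtain ⟨e, he⟩ := hX.2 (Set.range w) <| by
    rintro r ⟨⟨_, i, rfl⟩, ⟨_, j, rfl⟩, rfl⟩
    exact hw i j
  exact ⟨fun i => e ⟨w i, i, rfl⟩, fun i j => he _ _⟩

theorem exists_dist_eq_of_metricTriple {ι : Type} [Fintype ι] [Nonempty ι] (z : ι → X)
    (t : ι → ℝ) (htX : ∀ i, t i ∈ distSet X)
    (ht : ∀ i j, MetricTriple (dist (z i) (z j)) (t i) (t j)) :
    ∃ p : X, ∀ i, dist p (z i) = t i := by
  let κ : Option ι → ι → ℝ := fun o => o.elim t fun i k => dist (z i) (z k)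
  have hrow : ∀ i j, dist (κ (some i)) (κ (some j)) = dist (z i) (z j) :=
    dist_rows_eq (fun i j k => abs_dist_sub_le _ _ _) (fun _ => dist_self _)
  have hnone : ∀ i, dist (κ none) (κ (some i)) = t i := dist_katetov_row z ht
  obtain ⟨e, he⟩ := hX.exists_dist_eq_dist κ <| by
    rintro (_ | i) (_ | j)
    · rw [dist_self]
      exact ⟨z (Classical.arbitrary ι), _, dist_self _⟩
    · rw [hnone]; exact htX j
    · rw [dist_comm, hnone]; exact htX i
    · rw [hrow]; exact ⟨_, _, rfl⟩
  obtain ⟨g, hg⟩ := hX.1.exists_isometryEquiv_apply_eq (e ∘ some) z fun i j => by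
    simp only [comp_apply, he, hrow]
  exact ⟨g (e none), fun i => by rw [← hg i, comp_apply, g.dist_eq, he, hnone]⟩

theorem exists_nearby_copy :
    ∀ {n : ℕ} (x : Fin n → X) (q : Fin n → Fin n → ℝ) (s : Fin n → ℝ) (δ : ℝ),
    IsMetricOn q → (∀ i j, q i j ∈ distSet X) → (∀ i, s i ∈ distSet X) →
    (∀ i j, |dist (x i) (x j) - q i j| ≤ δ) → (∀ i j, i < j → s i + δ ≤ s j) →
    (∀ i j, i ≠ j → s i + s j + δ ≤ 2 * dist (x i) (x j)) →
    ∃ y : Fin n → X, (∀ i j, dist (y i) (y j) = q i j) ∧ ∀ i, dist (x i) (y i) = s i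
  | 0, x, _, _, _, _, _, _, _, _, _ => ⟨x, fun i => i.elim0, fun i => i.elim0⟩
  | n + 1, x, q, s, δ, hq, hqX, hsX, hxq, hgap, hsep => by
    obtain ⟨y, hyq, hxy⟩ := exists_nearby_copy (x ∘ Fin.castSucc)
      (fun i j => q i.castSucc j.castSucc) (s ∘ Fin.castSucc) δ
      (hq.comp (Fin.castSucc_injective n)) (fun _ _ => hqX _ _) (fun _ => hsX _)
      (fun _ _ => hxq _ _)
      (fun _ _ h => hgap _ _ (Fin.castSucc_lt_castSucc_iff.2 h))
      (fun _ _ h => hsep _ _ ((Fin.castSucc_injective n).ne h))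
    -- `y j` lies within `s j` of `x j`; the gap `s j + δ ≤ s (last n)` absorbs this together
    -- with the error `δ` between `dist (x (last n)) (x j)` and `q (last n) j`
    have hlast : ∀ j : Fin n, MetricTriple (dist (x (Fin.last n)) (y j)) (s (Fin.last n))
        (q (Fin.last n) j.castSucc) := by
      intro j
      have h₁ := dist_triangle (x (Fin.last n)) (x j.castSucc) (y j)
      have h₂ := dist_triangle (x (Fin.last n)) (y j) (x j.castSucc)
      have h₃ := abs_sub_le_iff.1 (hxq (Fin.last n) j.castSucc)
      have h₄ := hgap _ _ (Fin.castSucc_lt_last j)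
      have h₅ := hsep _ _ (Fin.castSucc_lt_last j).ne'
      have h₆ := hxy j
      simp only [comp_apply] at h₆
      rw [dist_comm (y j)] at h₂
      rw [metricTriple_iff]
      exact ⟨by linarith, by linarith, by linarith⟩
    obtain ⟨p, hp⟩ := hX.exists_dist_eq_of_metricTriple
      (fun o : Option (Fin n) => o.elim (x (Fin.last n)) y)
      (fun o => o.elim (s (Fin.last n)) fun j => q (Fin.last n) j.castSucc)
      (by rintro (_ | j) <;> simp [hsX, hqX]) <| by
        rintro (_ | i) (_ | j)
        · simpa [metricTriple_iff] using nonneg_of_mem_distSet (hsX (Fin.last n))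
        · exact hlast j
        · exact (dist_comm (y i) _ ▸ hlast i).swap
        · simpa only [Option.elim_some, hyq] using hq.metricTriple _ _ _
    refine ⟨Fin.snoc y p, fun i j => ?_, fun i => ?_⟩
    · induction i using Fin.lastCases <;> induction j using Fin.lastCases <;>
        simp only [Fin.snoc_last, Fin.snoc_castSucc]
      · rw [dist_self, hq.1]
      · exact hp (some _)
      · rw [dist_comm, hq.2.1]
        exact hp (some _)
      · exact hyq _ _
    · induction i using Fin.lastCases
      · rw [Fin.snoc_last, dist_comm]
        exact hp none
      · rw [Fin.snoc_castSucc]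
        exact hxy _

theorem exists_seq_copies {m : ℕ} {d : ℕ → Fin m → Fin m → ℝ} {s : ℕ → Fin m → ℝ} {δ : ℕ → ℝ}
    (hd : ∀ n, IsMetricOn (d n)) (hdX : ∀ n i j, d n i j ∈ distSet X)
    (hsX : ∀ n i, s n i ∈ distSet X) (hdd : ∀ n i j, |d n i j - d (n + 1) i j| ≤ δ n)
    (hgap : ∀ n i j, i < j → s n i + δ n ≤ s n j)
    (hsep : ∀ n i j, i ≠ j → s n i + s n j + δ n ≤ 2 * d n i j) :
    ∃ u : ℕ → Fin m → X, ∀ n, (∀ i j, dist (u n i) (u n j) = d n i j) ∧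
      ∀ i, dist (u n i) (u (n + 1) i) = s n i := by
  have hrows : ∀ n i j, dist (d n i) (d n j) = d n i j := fun n =>
    dist_rows_eq (hd n).abs_sub_le (hd n).1
  have h₀ : ∃ w : Fin m → X, ∀ i j, dist (w i) (w j) = d 0 i j :=
    (hX.exists_dist_eq_dist (d 0) fun i j => hrows 0 i j ▸ hdX 0 i j).imp
      fun w hw i j => (hw i j).trans (hrows 0 i j)
  have hstep : ∀ n (w : Fin m → X), (∀ i j, dist (w i) (w j) = d n i j) →
      ∃ w' : Fin m → X, (∀ i j, dist (w' i) (w' j) = d (n + 1) i j) ∧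
        ∀ i, dist (w i) (w' i) = s n i := fun n w hw =>
    hX.exists_nearby_copy w (d (n + 1)) (s n) (δ n) (hd _) (hdX _) (hsX n)
      (fun i j => hw i j ▸ hdd n i j) (hgap n) fun i j hij => hw i j ▸ hsep n i j hij
  exact exists_seq_of_forall_exists_succ h₀ hstep

theorem exists_seq_approx (hlim : ZeroLimit (distSet X)) {m : ℕ} {A : Type*} [MetricSpace A]
    {a : Fin m → A} (ha : Injective a)
    (H : ∀ ε > 0, ∃ d : Fin m → Fin m → ℝ, IsMetricOn d ∧ (∀ i j, d i j ∈ distSet X) ∧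
      ∀ i j, |dist (a i) (a j) - d i j| < ε) :
    ∃ u : ℕ → Fin m → X, ∀ n i j, dist (u n i) (u (n + 1) i) ≤ (1 / 2) ^ n ∧
      |dist (u n i) (u n j) - dist (a i) (a j)| ≤ (1 / 2) ^ n := by
  obtain ⟨μ, hμ, haμ⟩ := exists_pos_le_dist ha
  have hε : ∀ n : ℕ, 0 < min ((1 / 2 : ℝ) ^ n) (μ / 8) := fun n => by positivity
  choose s δ hδ hδε hs hgap using fun n => hlim.exists_chain m (hε n)
  -- `d n` is compared with `d (n - 1)` up to `δ n` and with `d (n + 1)` up to `δ (n + 1)`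
  have hη : ∀ n, 0 < min (δ n) (δ (n + 1)) / 2 := fun n => by
    have := hδ n
    have := hδ (n + 1)
    positivity
  choose d hd hdX hda using fun n => H _ (hη n)
  obtain ⟨u, hu⟩ := hX.exists_seq_copies hd hdX (fun n i => (hs (n + 1) i).1)
    (fun n i j => by
      have h₁ := abs_sub_lt_iff.1 (hda n i j)
      have h₂ := abs_sub_lt_iff.1 (hda (n + 1) i j)
      have := min_le_right (δ n) (δ (n + 1))
      have := min_le_left (δ (n + 1)) (δ (n + 2))
      rw [abs_sub_le_iff]
      constructor <;> linarith)
    (fun n => hgap (n + 1)) fun n i j hij => by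
      have h₁ := abs_sub_lt_iff.1 (hda n i j)
      have := haμ i j hij
      have := (hs (n + 1) i).2.trans_le (min_le_right _ _)
      have := (hs (n + 1) j).2.trans_le (min_le_right _ _)
      have := (hδε (n + 1)).trans_le (min_le_right _ _)
      have := min_le_left (δ n) (δ (n + 1))
      have := (hδε n).trans_le (min_le_right _ _)
      linarith
  refine ⟨u, fun n i j => ⟨?_, ?_⟩⟩
  · rw [(hu n).2 i]
    have := (hs (n + 1) i).2.trans_le (min_le_left _ _)
    have := pow_le_pow_of_le_one (by norm_num : (0 : ℝ) ≤ 1 / 2) (by norm_num) (n.le_add_right 1)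
    linarith
  · rw [(hu n).1 i j, abs_sub_comm]
    have := (hδε n).trans_le (min_le_left _ _)
    have := min_le_left (δ n) (δ (n + 1))
    linarith [hda n i j, hδ n]

theorem exists_dist_eq_of_approx (hlim : ZeroLimit (distSet X)) {Y : Type*} [MetricSpace Y]
    [CompleteSpace Y] {φ : X → Y} (hφ : Isometry φ) {m : ℕ} {A : Type*} [MetricSpace A]
    {a : Fin m → A} (ha : Injective a)
    (H : ∀ ε > 0, ∃ d : Fin m → Fin m → ℝ, IsMetricOn d ∧ (∀ i j, d i j ∈ distSet X) ∧
      ∀ i j, |dist (a i) (a j) - d i j| < ε) :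
    ∃ L : Fin m → Y, ∀ i j, dist (L i) (L j) = dist (a i) (a j) := by
  obtain ⟨u, hu⟩ := hX.exists_seq_approx hlim ha H
  refine exists_dist_eq_of_tendsto_dist (u := fun n i => φ (u n i))
    (fun i => cauchySeq_of_le_geometric (1 / 2) 1 (by norm_num) fun n => ?_) fun i j => ?_
  · rw [hφ.dist_eq, one_mul]
    exact (hu n i i).1
  · simp only [hφ.dist_eq]
    exact tendsto_iff_norm_sub_tendsto_zero.2 <| squeeze_zero (fun _ => norm_nonneg _)
      (fun n => (hu n i j).2) (tendsto_pow_atTop_nhds_zero_of_lt_one (by norm_num) (by norm_num))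

end IsUniversal

theorem statement6_general (R : Set ℝ) (hlim : ZeroLimit R)
    (U : Type) [MetricSpace U] (hU : IsUniversal U) (hdU : distSet U = R)
    (m : ℕ) (A : Type) [MetricSpace A] (a : Fin m → A) (ha : Function.Bijective a) :
    (∃ f : A → UniformSpace.Completion U,
        ∀ x y : A, dist (f x) (f y) = dist x y) ↔
      ∀ ε > 0, ∃ dB : Fin m → Fin m → ℝ, IsMetricOn dB ∧ (∀ i j, dB i j ∈ R) ∧
        ∀ i j, |dist (a i) (a j) - dB i j| < ε := by
  subst hdU
  constructor
  · rintro ⟨f, hf⟩ ε hε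
    obtain ⟨d, hd, hdU, hdε⟩ := exists_isMetricOn_approx_of_denseRange
      UniformSpace.Completion.coe_isometry UniformSpace.Completion.denseRange_coe
      ((Isometry.of_dist_eq hf).injective.comp ha.injective) hε
    exact ⟨d, hd, hdU, fun i j => hf (a i) (a j) ▸ hdε i j⟩
  · intro H
    obtain ⟨L, hL⟩ := hU.exists_dist_eq_of_approx hlim UniformSpace.Completion.coe_isometry
      ha.injective H
    refine ⟨L ∘ (Equiv.ofBijective a ha).symm, fun x y => ?_⟩
    rw [comp_apply, comp_apply, hL, Equiv.ofBijective_apply_symm_apply a ha,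
      Equiv.ofBijective_apply_symm_apply a ha]

/-- Let `0 ∈ R ⊆ [0,∞)` be countable, satisfying the 4-values condition, with
`0` as a limit point, and let `M` be the completion of a countable universal metric space `U`
with distance set `R`. A finite metric space `A = {a_0, …, a_{m-1}}` embeds isometrically
into `M` iff for every `ε > 0` there is a metric space `B = {b_0, …, b_{m-1}}` with
distances in `R` such that `|d_A(a_i, a_j) - d_B(b_i, b_j)| < ε` for all `i, j < m`. -/
theorem statement6 (R : Set ℝ) (hR : R ⊆ Set.Ici 0) (h0 : (0 : ℝ) ∈ R)
    (hcount : R.Countable) (h4 : FourValues R) (hlim : ZeroLimit R)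
    (U : Type) [MetricSpace U] [Countable U] (hU : IsUniversal U) (hdU : distSet U = R)
    (m : ℕ) (A : Type) [MetricSpace A] (a : Fin m → A) (ha : Function.Bijective a) :
    (∃ f : A → UniformSpace.Completion U,
        ∀ x y : A, dist (f x) (f y) = dist x y) ↔
      ∀ ε > 0, ∃ dB : Fin m → Fin m → ℝ, IsMetricOn dB ∧ (∀ i j, dB i j ∈ R) ∧
        ∀ i j, |dist (a i) (a j) - dB i j| < ε :=
  statement6_general R hlim U hU hdU m A a ha
end
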